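/- arXiv:2012.12568 — 2 statements merged into one kernel-verified Lean document; each statement's English description precedes it below -/
import Mathlib

section
/- Let α be a composition of n, let T ∈ SYRT(α), and let 1 ≤ i ≤ n−1. If π_i(T) = s_i(T), then s_i(T) ∼ T. Consequently, for each ∼-equivalence class E_j, the ℂ-span R_α^{E_j} of E_j inside the free ℂ-vector space on SYRT(α) is invariant under all the linearly extended operators π_i, i.e., R_α^{E_j} is an H_n(0)-submodule of R_α. -/
open Classical

namespace YRS

/-- `α` is a composition of `n`: a list of positive integers summing to `n`. -/
def IsComposition (n : ℕ) (α : List ℕ) : Prop :=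
  (∀ a ∈ α, 0 < a) ∧ α.sum = n

/-- The cell `κ = (c, r)` (column `c`, row `r`, both 1-indexed, French notation)
belongs to the diagram `D(α)`. -/
def inDiagram (α : List ℕ) (κ : ℕ × ℕ) : Prop :=
  1 ≤ κ.2 ∧ κ.2 ≤ α.length ∧ 1 ≤ κ.1 ∧ κ.1 ≤ α.getD (κ.2 - 1) 0

/-- `T` is a standard Young row-strict composition tableau of shape `α` (with entries
`1,…,n`), modelled as a total function on cells that vanishes off the diagram. -/
def IsSYRT (n : ℕ) (α : List ℕ) (T : ℕ × ℕ → ℕ) : Prop :=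
  (∀ κ, ¬ inDiagram α κ → T κ = 0) ∧
  (∀ κ, inDiagram α κ → 1 ≤ T κ ∧ T κ ≤ n) ∧
  (∀ κ κ', inDiagram α κ → inDiagram α κ' → T κ = T κ' → κ = κ') ∧
  (∀ v, 1 ≤ v → v ≤ n → ∃ κ, inDiagram α κ ∧ T κ = v) ∧
  (∀ c r, inDiagram α (c, r) → inDiagram α (c + 1, r) → T (c, r) < T (c + 1, r)) ∧
  (∀ r r', inDiagram α (1, r) → inDiagram α (1, r') → r < r' → T (1, r) < T (1, r')) ∧
  (∀ c r r', r' < r → inDiagram α (c, r) → inDiagram α (c + 1, r') →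
      T (c, r) < T (c + 1, r') → inDiagram α (c + 1, r) ∧ T (c + 1, r) < T (c + 1, r'))

/-- The cell of `T` containing the entry `v` (junk value `(0,0)` if there is none). -/
noncomputable def cellOf (α : List ℕ) (T : ℕ × ℕ → ℕ) (v : ℕ) : ℕ × ℕ :=
  if h : ∃ κ, inDiagram α κ ∧ T κ = v then h.choose else (0, 0)

/-- The filling obtained from `T` by exchanging the entries `i` and `i+1`. -/
def swapFun (i : ℕ) (T : ℕ × ℕ → ℕ) : ℕ × ℕ → ℕ := fun κ =>
  if T κ = i then i + 1 else if T κ = i + 1 then i else T κ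

/-- The 0-Hecke operator `π_i` at the level of fillings:
`some T` if `i+1` is weakly left of `i`; `none` (i.e. `0`) if `i+1` is
right-adjacent to `i`; and `some (s_i T)` otherwise. -/
noncomputable def piFun (α : List ℕ) (i : ℕ) (T : ℕ × ℕ → ℕ) : Option (ℕ × ℕ → ℕ) :=
  if (cellOf α T (i + 1)).1 ≤ (cellOf α T i).1 then some T
  else if cellOf α T (i + 1) = ((cellOf α T i).1 + 1, (cellOf α T i).2) then none
  else some (swapFun i T)

/-- The descent set of `T`: entries `i` (with `1 ≤ i ≤ n-1`) such that `i+1` lies in a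
column strictly to the right of the column of `i`. -/
def DesSet (n : ℕ) (α : List ℕ) (T : ℕ × ℕ → ℕ) : Set ℕ :=
  {i | 1 ≤ i ∧ i < n ∧ (cellOf α T i).1 < (cellOf α T (i + 1)).1}

/-- `T ∼ T'`: in every column, the relative order (bottom to top) of the entries of `T`
agrees with that of `T'`. -/
def simRel (α : List ℕ) (T T' : ℕ × ℕ → ℕ) : Prop :=
  ∀ c r r', inDiagram α (c, r) → inDiagram α (c, r') →
    (T (c, r) < T (c, r') ↔ T' (c, r) < T' (c, r'))

/-- Entries of `T` increase from bottom to top in every column (membership in `E_0`). -/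
def colsIncreasing (α : List ℕ) (T : ℕ × ℕ → ℕ) : Prop :=
  ∀ c r r', inDiagram α (c, r) → inDiagram α (c, r') → r < r' → T (c, r) < T (c, r')

/-- `T` is a source tableau of its `∼`-equivalence class: no `T' ≠ T` in the class of `T`
satisfies `π_i(T') = T` for some `i`. -/
def IsSource (n : ℕ) (α : List ℕ) (T : ℕ × ℕ → ℕ) : Prop :=
  ¬ ∃ T', IsSYRT n α T' ∧ simRel α T' T ∧ T' ≠ T ∧
      ∃ i, 1 ≤ i ∧ i < n ∧ piFun α i T' = some T

/-- One step of the `π`-operators: `π_i(T) = S` (as a tableau) for some `i`. -/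
def piStep (n : ℕ) (α : List ℕ) (T S : ℕ × ℕ → ℕ) : Prop :=
  ∃ i, 1 ≤ i ∧ i < n ∧ piFun α i T = some S

/-- `T ⪯ S`: `S` is obtained from `T` by a (possibly empty) sequence of `π`-operators. -/
def preceq (n : ℕ) (α : List ℕ) : (ℕ × ℕ → ℕ) → (ℕ × ℕ → ℕ) → Prop :=
  Relation.ReflTransGen (piStep n α)

/-- Removable cell of `D(α)`: rightmost cell of the top row, or the rightmost cell of a
row of length at least 2 such that no higher row has exactly one fewer cell. -/
def Removable (α : List ℕ) (κ : ℕ × ℕ) : Prop :=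
  inDiagram α κ ∧ κ.1 = α.getD (κ.2 - 1) 0 ∧
    (κ.2 = α.length ∨
      (2 ≤ α.getD (κ.2 - 1) 0 ∧
        ∀ r, κ.2 < r → r ≤ α.length → α.getD (r - 1) 0 + 1 ≠ α.getD (κ.2 - 1) 0))

/-- A removable cell of `D(α)` containing the largest entry of `T` in its column. -/
def DistRemovable (α : List ℕ) (T : ℕ × ℕ → ℕ) (κ : ℕ × ℕ) : Prop :=
  Removable α κ ∧ ∀ r, inDiagram α (κ.1, r) → r ≠ κ.2 → T (κ.1, r) < T κ

/-- Simple composition: whenever `α_j ≥ α_i ≥ 2` with `i < j`, some `α_k` with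
`i ≤ k ≤ j` equals `α_i - 1`. -/
def SimpleComp (α : List ℕ) : Prop :=
  ∀ i j, 1 ≤ i → i < j → j ≤ α.length → 2 ≤ α.getD (i - 1) 0 →
    α.getD (i - 1) 0 ≤ α.getD (j - 1) 0 →
    ∃ k, i ≤ k ∧ k ≤ j ∧ α.getD (k - 1) 0 + 1 = α.getD (i - 1) 0

/-- Decrease the `i`-th part (1-indexed) of `α` by one, deleting it if it becomes `0`. -/
def reduceAt (α : List ℕ) (i : ℕ) : List ℕ :=
  if α.getD (i - 1) 0 = 1 then α.eraseIdx (i - 1)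
  else α.set (i - 1) (α.getD (i - 1) 0 - 1)

/-- The number of columns of `D(α)`. -/
def width (α : List ℕ) : ℕ := α.foldr max 0

/-- Boundary cell: a cell of the first column, or a cell with no cell of `D(α)` strictly
above it in its own column or the column immediately to the left. -/
def Boundary (α : List ℕ) (κ : ℕ × ℕ) : Prop :=
  inDiagram α κ ∧ (κ.1 = 1 ∨
    ∀ r, κ.2 < r → ¬ inDiagram α (κ.1, r) ∧ ¬ inDiagram α (κ.1 - 1, r))

/-- The boundary cells listed in order: up the first column, then rightwards (for each
column `c ≥ 2` there is at most one boundary cell). -/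
noncomputable def boundaryList (α : List ℕ) : List (ℕ × ℕ) :=
  ((List.range α.length).map fun r => ((1 : ℕ), r + 1)) ++
    ((List.range (width α)).filterMap fun c =>
      if h : ∃ r, Boundary α (c + 2, r) then some ((c + 2, h.choose) : ℕ × ℕ) else none)

/-- The highest cell of `D(α)` strictly below `κ` in the column immediately to the right
of `κ` that is not yet threaded (i.e. not in `S`), if any. -/
noncomputable def nextCell (α : List ℕ) (S : Finset (ℕ × ℕ)) (κ : ℕ × ℕ) :
    Option (ℕ × ℕ) :=
  if h : ∃ r, r < κ.2 ∧ inDiagram α (κ.1 + 1, r) ∧ (κ.1 + 1, r) ∉ S ∧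
      ∀ r', r < r' → r' < κ.2 → inDiagram α (κ.1 + 1, r') → (κ.1 + 1, r') ∈ S
  then some ((κ.1 + 1, h.choose) : ℕ × ℕ) else none

/-- The thread starting at `κ`, given the set `S` of already threaded cells
(`fuel` bounds the length). -/
noncomputable def threadAux (α : List ℕ) (S : Finset (ℕ × ℕ)) :
    ℕ → (ℕ × ℕ) → List (ℕ × ℕ)
  | 0, κ => [κ]
  | fuel + 1, κ =>
      κ ::
        (match nextCell α S κ with
          | none => []
          | some κ' => threadAux α S fuel κ')

/-- The threads of the given boundary cells, constructed iteratively. -/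
noncomputable def threadsAux (α : List ℕ) :
    List (ℕ × ℕ) → Finset (ℕ × ℕ) → List (List (ℕ × ℕ))
  | [], _ => []
  | κ :: rest, S =>
      threadAux α S (width α) κ ::
        threadsAux α rest (S ∪ (threadAux α S (width α) κ).toFinset)

/-- The threads of `D(α)`, in order. -/
noncomputable def threads (α : List ℕ) : List (List (ℕ × ℕ)) :=
  threadsAux α (boundaryList α) ∅

/-- Fill the threads with consecutive integers, each thread from its rightmost cell (the
last cell of the list) to its leftmost cell (the boundary cell). -/
noncomputable def fillAux : List (List (ℕ × ℕ)) → ℕ → (ℕ × ℕ) → ℕ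
  | [], _, _ => 0
  | L :: rest, off, κ =>
      if κ ∈ L then off + L.length - L.idxOf κ else fillAux rest (off + L.length) κ

/-- The tableau `T_sup`: the `k`-th thread is filled with the next `|L_k|` consecutive
integers, from right to left. -/
noncomputable def TsupFun (α : List ℕ) : ℕ × ℕ → ℕ :=
  fun κ => fillAux (threads α) 0 κ

/-- The row-by-row "superstandard" filling: row `r` gets the entries
`α_1 + ⋯ + α_{r-1} + 1, …, α_1 + ⋯ + α_r` from left to right. -/
noncomputable def rowFill (α : List ℕ) : ℕ × ℕ → ℕ :=
  fun κ => if inDiagram α κ then (α.take (κ.2 - 1)).sum + κ.1 else 0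

/-- The type of standard Young row-strict composition tableaux of shape `α`. -/
def SYRTof (n : ℕ) (α : List ℕ) : Type :=
  {T : ℕ × ℕ → ℕ // IsSYRT n α T}

/-- `π_i` applied to a basis vector of the free `ℂ`-vector space on `SYRT(α)`. -/
noncomputable def piVec (n : ℕ) (α : List ℕ) (i : ℕ) (T : SYRTof n α) :
    SYRTof n α →₀ ℂ :=
  match piFun α i T.val with
  | none => 0
  | some T' =>
      if h : IsSYRT n α T' then Finsupp.single (⟨T', h⟩ : SYRTof n α) 1 else 0

/-- The `ℂ`-linear extension of `π_i` to the free `ℂ`-vector space on `SYRT(α)`. -/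
noncomputable def piOp (n : ℕ) (α : List ℕ) (i : ℕ) :
    (SYRTof n α →₀ ℂ) →ₗ[ℂ] (SYRTof n α →₀ ℂ) :=
  Finsupp.lift (SYRTof n α →₀ ℂ) ℂ (SYRTof n α) (piVec n α i)

/-- The span `R_α^{E_0}` of the tableaux whose columns increase from bottom to top. -/
noncomputable def E0span (n : ℕ) (α : List ℕ) : Submodule ℂ (SYRTof n α →₀ ℂ) :=
  Submodule.span ℂ
    ((fun T : SYRTof n α => Finsupp.single T (1 : ℂ)) '' {T | colsIncreasing α T.val})

/-- Apply the operators `π_i` for `i` in the list `l` from left to right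
(`piSeq α [i₁, i₂, …] T = ⋯ (π_{i₂} (π_{i₁} T))`), with `none` meaning `0`. -/
noncomputable def piSeq (α : List ℕ) (l : List ℕ) (T : ℕ × ℕ → ℕ) :
    Option (ℕ × ℕ → ℕ) :=
  l.foldl (fun o i => o.bind (piFun α i)) (some T)

end YRS

namespace YRS

lemma cellOf_eq {n : ℕ} {α : List ℕ} {T : ℕ × ℕ → ℕ} (hT : IsSYRT n α T)
    {κ : ℕ × ℕ} {v : ℕ} (hκ : inDiagram α κ) (hv : T κ = v) :
    cellOf α T v = κ := by
  have h : ∃ κ, inDiagram α κ ∧ T κ = v := ⟨κ, hκ, hv⟩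
  rw [cellOf, dif_pos h]
  exact hT.2.2.1 _ _ h.choose_spec.1 hκ (h.choose_spec.2.trans hv.symm)

lemma simRel_swap {n : ℕ} {α : List ℕ} {T : ℕ × ℕ → ℕ} (hT : IsSYRT n α T)
    {i : ℕ} (hi : 1 ≤ i) (hin : i < n)
    (hpi : piFun α i T = some (swapFun i T)) : simRel α (swapFun i T) T := by
  by_cases h1 : (cellOf α T (i + 1)).1 ≤ (cellOf α T i).1
  · rw [piFun, if_pos h1] at hpi
    have hs : T = swapFun i T := Option.some.inj hpi
    intro c r r' _ _
    rw [← hs]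
  · obtain ⟨κi, hκi, hTi⟩ := hT.2.2.2.1 i hi (le_of_lt hin)
    obtain ⟨κj, hκj, hTj⟩ := hT.2.2.2.1 (i + 1) (by omega) hin
    have hci : cellOf α T i = κi := cellOf_eq hT hκi hTi
    have hcj : cellOf α T (i + 1) = κj := cellOf_eq hT hκj hTj
    have hlt : κi.1 < κj.1 := by rw [hci, hcj] at h1; omega
    intro c r r' hr hr'
    have key : ∀ κ κ' : ℕ × ℕ, inDiagram α κ → inDiagram α κ' → κ.1 = κ'.1 →
        (swapFun i T κ < swapFun i T κ' ↔ T κ < T κ') := by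
      intro κ κ' hκ hκ' hcc
      have hA : ¬(T κ = i ∧ T κ' = i + 1) := by
        rintro ⟨ha, hb⟩
        have e1 : κ = κi := hT.2.2.1 _ _ hκ hκi (ha.trans hTi.symm)
        have e2 : κ' = κj := hT.2.2.1 _ _ hκ' hκj (hb.trans hTj.symm)
        rw [e1, e2] at hcc; omega
      have hB : ¬(T κ = i + 1 ∧ T κ' = i) := by
        rintro ⟨ha, hb⟩
        have e1 : κ = κj := hT.2.2.1 _ _ hκ hκj (ha.trans hTj.symm)
        have e2 : κ' = κi := hT.2.2.1 _ _ hκ' hκi (hb.trans hTi.symm)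
        rw [e1, e2] at hcc; omega
      unfold swapFun
      split_ifs <;> omega
    exact key (c, r) (c, r') hr hr' rfl

lemma simRel_trans {α : List ℕ} {A B C : ℕ × ℕ → ℕ}
    (h1 : simRel α A B) (h2 : simRel α B C) : simRel α A C :=
  fun c r r' hr hr' => (h1 c r r' hr hr').trans (h2 c r r' hr hr')

lemma piVec_none {n : ℕ} {α : List ℕ} {i : ℕ} {T : SYRTof n α}
    (h : piFun α i T.val = none) : piVec n α i T = 0 := by
  unfold piVec; rw [h]

lemma piVec_some {n : ℕ} {α : List ℕ} {i : ℕ} {T : SYRTof n α} {T' : ℕ × ℕ → ℕ}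
    (h : piFun α i T.val = some T') :
    piVec n α i T =
      if h' : IsSYRT n α T' then Finsupp.single (⟨T', h'⟩ : SYRTof n α) 1 else 0 := by
  unfold piVec; rw [h]; rfl

end YRS

/-- If `π_i(T) = s_i(T)` then `s_i(T) ∼ T`; consequently the span of any
`∼`-equivalence class is invariant under all the linearly extended operators `π_i`. -/
theorem stmt4 (n : ℕ) (α : List ℕ) (hα : YRS.IsComposition n α) :
    (∀ T, YRS.IsSYRT n α T → ∀ i, 1 ≤ i → i < n →
      YRS.piFun α i T = some (YRS.swapFun i T) → YRS.simRel α (YRS.swapFun i T) T) ∧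
    (∀ T₀ : ℕ × ℕ → ℕ, YRS.IsSYRT n α T₀ → ∀ i, 1 ≤ i → i < n →
      ∀ x ∈ Submodule.span ℂ
          ((fun T : YRS.SYRTof n α => Finsupp.single T (1 : ℂ)) ''
            {T | YRS.simRel α T.val T₀}),
        YRS.piOp n α i x ∈ Submodule.span ℂ
          ((fun T : YRS.SYRTof n α => Finsupp.single T (1 : ℂ)) ''
            {T | YRS.simRel α T.val T₀})) := by
  constructor
  · exact fun T hT i hi hin hpi => YRS.simRel_swap hT hi hin hpi
  · intro T₀ hT₀ i hi hin x hx
    set V := Submodule.span ℂ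
        ((fun T : YRS.SYRTof n α => Finsupp.single T (1 : ℂ)) ''
          {T | YRS.simRel α T.val T₀}) with hV
    refine Submodule.span_induction ?_ ?_ ?_ ?_ hx
    · rintro _ ⟨T, hTmem, rfl⟩
      have hlift : YRS.piOp n α i (Finsupp.single T (1 : ℂ)) = YRS.piVec n α i T := by
        simp [YRS.piOp, Finsupp.lift_apply, Finsupp.sum_single_index]
      rw [hlift]
      by_cases h1 : (YRS.cellOf α T.val (i + 1)).1 ≤ (YRS.cellOf α T.val i).1
      · have hp : YRS.piFun α i T.val = some T.val := by rw [YRS.piFun, if_pos h1]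
        rw [YRS.piVec_some hp, dif_pos T.2]
        exact Submodule.subset_span ⟨T, hTmem, rfl⟩
      · by_cases h2 : YRS.cellOf α T.val (i + 1) =
            ((YRS.cellOf α T.val i).1 + 1, (YRS.cellOf α T.val i).2)
        · have hp : YRS.piFun α i T.val = none := by
            rw [YRS.piFun, if_neg h1, if_pos h2]
          rw [YRS.piVec_none hp]
          exact zero_mem _
        · have hp : YRS.piFun α i T.val = some (YRS.swapFun i T.val) := by
            rw [YRS.piFun, if_neg h1, if_neg h2]
          rw [YRS.piVec_some hp]
          by_cases hS : YRS.IsSYRT n α (YRS.swapFun i T.val)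
          · rw [dif_pos hS]
            exact Submodule.subset_span ⟨⟨YRS.swapFun i T.val, hS⟩,
              YRS.simRel_trans (YRS.simRel_swap T.2 hi hin hp) hTmem, rfl⟩
          · rw [dif_neg hS]
            exact zero_mem _
    · simp only [map_zero]; exact zero_mem _
    · intro a b _ _ ha hb
      rw [map_add]; exact add_mem ha hb
    · intro c a _ ha
      rw [map_smul]; exact Submodule.smul_mem _ _ ha
end

section
/- Let α be a composition of n. If there exists T ∈ SYRT(α) whose entries in some column do not increase from bottom to top, then the H_n(0)-module R_α is decomposable: there exist two nonzero subspaces U and V of R_α, each invariant under all the linearly extended operators π_i, such that R_α = U ⊕ V. -/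
open Classical

namespace YRS

lemma sum_take_succ' (α : List ℕ) (r : ℕ) (h : r < α.length) :
    (α.take (r+1)).sum = (α.take r).sum + α.getD r 0 := by
  induction α generalizing r with
  | nil => simp at h
  | cons a l ih =>
    cases r with
    | zero => simp
    | succ m =>
      simp only [List.take_succ_cons, List.sum_cons, List.getD_cons_succ]
      rw [ih m (by simpa using h)]; omega

lemma sum_take_mono (α : List ℕ) {r r' : ℕ} (h : r ≤ r') :
    (α.take r).sum ≤ (α.take r').sum := by
  have h2 := List.sum_take_add_sum_drop (α.take r') r
  rw [List.take_take, min_eq_left h] at h2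
  omega

lemma sum_take_strict (α : List ℕ) {r r' : ℕ} (h : r < r') (h2 : r < α.length) :
    (α.take r).sum + α.getD r 0 ≤ (α.take r').sum := by
  rw [← sum_take_succ' α r h2]; exact sum_take_mono α h

lemma exists_row (α : List ℕ) (v : ℕ) (h1 : 1 ≤ v) (h2 : v ≤ α.sum) :
    ∃ r, 1 ≤ r ∧ r ≤ α.length ∧ (α.take (r-1)).sum < v ∧ v ≤ (α.take r).sum := by
  induction α generalizing v with
  | nil => simp at h2; omega
  | cons a l ih =>
    by_cases hva : v ≤ a
    · exact ⟨1, le_refl _, by simp, by simp; omega, by simpa using hva⟩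
    · obtain ⟨r, hr1, hr2, hr3, hr4⟩ := ih (v - a) (by omega) (by simp at h2 ⊢; omega)
      obtain ⟨m, rfl⟩ : ∃ m, r = m + 1 := ⟨r - 1, by omega⟩
      refine ⟨m + 2, by omega, by simp; omega, ?_, ?_⟩
      · simp only [show m + 2 - 1 = m + 1 from rfl, List.take_succ_cons, List.sum_cons]
        simp only [show m + 1 - 1 = m from rfl] at hr3
        omega
      · simp only [List.take_succ_cons, List.sum_cons]
        omega

lemma rowFill_row_lt {α : List ℕ} {c r c' r' : ℕ} (h : r < r')
    (h1 : inDiagram α (c, r)) (h2 : inDiagram α (c', r')) :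
    rowFill α (c, r) < rowFill α (c', r') := by
  obtain ⟨ha, hb, hc, hd⟩ := id h1
  obtain ⟨ha', hb', hc', hd'⟩ := id h2
  simp only at ha hb hc hd ha' hb' hc' hd'
  have key : (α.take (r-1)).sum + α.getD (r-1) 0 ≤ (α.take (r'-1)).sum :=
    sum_take_strict α (by omega) (by omega)
  simp only [rowFill, if_pos h1, if_pos h2]
  omega

lemma rowFill_isSYRT (n : ℕ) (α : List ℕ) (hα : IsComposition n α) :
    IsSYRT n α (rowFill α) := by
  obtain ⟨hpos, hsum⟩ := hα
  refine ⟨fun κ hκ => by simp [rowFill, if_neg hκ], ?_, ?_, ?_, ?_, ?_, ?_⟩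
  · rintro ⟨c, r⟩ hκ
    obtain ⟨ha, hb, hc, hd⟩ := id hκ
    simp only at ha hb hc hd
    simp only [rowFill, if_pos hκ]
    refine ⟨by omega, ?_⟩
    have e : (α.take (r-1+1)).sum = (α.take (r-1)).sum + α.getD (r-1) 0 :=
      sum_take_succ' α (r-1) (by omega)
    rw [show r - 1 + 1 = r from by omega] at e
    have m := sum_take_mono α hb
    rw [List.take_length, hsum] at m
    omega
  · rintro ⟨c, r⟩ ⟨c', r'⟩ hκ hκ' heq
    rcases Nat.lt_trichotomy r r' with h | h | h
    · exact absurd heq (Nat.ne_of_lt (rowFill_row_lt h hκ hκ'))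
    · subst h
      simp only [rowFill, if_pos hκ, if_pos hκ'] at heq
      simp only [Prod.mk.injEq]
      constructor
      · omega
      · trivial
    · exact absurd heq.symm (Nat.ne_of_lt (rowFill_row_lt h hκ' hκ))
  · intro v hv1 hv2
    obtain ⟨r, hr1, hr2, hr3, hr4⟩ := exists_row α v hv1 (by omega)
    have hstep : (α.take r).sum = (α.take (r-1)).sum + α.getD (r-1) 0 := by
      have e := sum_take_succ' α (r-1) (by omega)
      rw [show r - 1 + 1 = r from by omega] at e
      exact e
    have hin : inDiagram α (v - (α.take (r-1)).sum, r) := by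
      refine ⟨?_, ?_, ?_, ?_⟩
      · exact hr1
      · exact hr2
      · show 1 ≤ v - (α.take (r-1)).sum; omega
      · show v - (α.take (r-1)).sum ≤ α.getD (r - 1) 0; omega
    refine ⟨_, hin, ?_⟩
    simp only [rowFill, if_pos hin]
    omega
  · intro c r h1 h2
    simp only [rowFill, if_pos h1, if_pos h2]
    omega
  · intro r r' h1 h2 hlt
    exact rowFill_row_lt hlt h1 h2
  · intro c r r' hlt h1 h2 hT
    exact absurd hT (Nat.not_lt.2 (Nat.le_of_lt (rowFill_row_lt hlt h2 h1)))

lemma rowFill_colsIncreasing (α : List ℕ) : colsIncreasing α (rowFill α) :=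
  fun _ _ _ h1 h2 hlt => rowFill_row_lt hlt h1 h2

end YRS
namespace YRS

lemma cellOf_spec {α : List ℕ} {T : ℕ × ℕ → ℕ} {v : ℕ}
    (h : ∃ κ, inDiagram α κ ∧ T κ = v) :
    inDiagram α (cellOf α T v) ∧ T (cellOf α T v) = v := by
  unfold cellOf
  rw [dif_pos h]
  exact h.choose_spec

lemma swap_lt_iff {n : ℕ} {α : List ℕ} {T : ℕ × ℕ → ℕ} {i : ℕ}
    (hT : IsSYRT n α T) (hi : 1 ≤ i) (hin : i < n)
    (hcol : (cellOf α T i).1 ≠ (cellOf α T (i+1)).1) :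
    ∀ κ κ', inDiagram α κ → inDiagram α κ' → κ.1 = κ'.1 →
      (swapFun i T κ < swapFun i T κ' ↔ T κ < T κ') := by
  obtain ⟨hz, hbd, hinj, hsurj, _, _, _⟩ := hT
  have hci := cellOf_spec (hsurj i hi (by omega))
  have hcj := cellOf_spec (hsurj (i+1) (by omega) (by omega))
  intro κ κ' hκ hκ' hcc
  by_cases e1 : T κ = i
  · by_cases e2 : T κ' = i + 1
    · exfalso
      have : κ = cellOf α T i := hinj κ _ hκ hci.1 (by rw [e1, hci.2])
      have : κ' = cellOf α T (i+1) := hinj κ' _ hκ' hcj.1 (by rw [e2, hcj.2])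
      apply hcol
      rw [← ‹κ = cellOf α T i›, ← ‹κ' = cellOf α T (i+1)›, hcc]
    · simp only [swapFun]
      split_ifs <;> omega
  · by_cases e2 : T κ' = i
    · by_cases e1' : T κ = i + 1
      · exfalso
        have : κ = cellOf α T (i+1) := hinj κ _ hκ hcj.1 (by rw [e1', hcj.2])
        have : κ' = cellOf α T i := hinj κ' _ hκ' hci.1 (by rw [e2, hci.2])
        apply hcol
        rw [← ‹κ = cellOf α T (i+1)›, ← ‹κ' = cellOf α T i›, hcc]
      · simp only [swapFun]
        split_ifs <;> omega
    · simp only [swapFun]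
      split_ifs <;> omega

lemma colsInc_swap_iff {n : ℕ} {α : List ℕ} {T : ℕ × ℕ → ℕ} {i : ℕ}
    (hT : IsSYRT n α T) (hi : 1 ≤ i) (hin : i < n)
    (hcol : (cellOf α T i).1 ≠ (cellOf α T (i+1)).1) :
    (colsIncreasing α (swapFun i T) ↔ colsIncreasing α T) := by
  constructor <;> intro h c r r' h1 h2 hlt
  · exact (swap_lt_iff hT hi hin hcol (c, r) (c, r') h1 h2 rfl).1 (h c r r' h1 h2 hlt)
  · exact (swap_lt_iff hT hi hin hcol (c, r) (c, r') h1 h2 rfl).2 (h c r r' h1 h2 hlt)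

lemma piVec_cases {n : ℕ} {α : List ℕ} (i : ℕ) (hi : 1 ≤ i) (hin : i < n)
    (T : SYRTof n α) :
    piVec n α i T = 0 ∨ ∃ T' : SYRTof n α, piVec n α i T = Finsupp.single T' 1 ∧
      (colsIncreasing α T'.val ↔ colsIncreasing α T.val) := by
  by_cases h1 : (cellOf α T.val (i+1)).1 ≤ (cellOf α T.val i).1
  · right
    refine ⟨T, ?_, Iff.rfl⟩
    simp only [piVec, piFun, if_pos h1]
    rw [dif_pos T.2]
    congr 1
  · by_cases h2 : cellOf α T.val (i+1) = ((cellOf α T.val i).1 + 1, (cellOf α T.val i).2)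
    · left
      simp only [piVec, piFun, if_neg h1, if_pos h2]
    · simp only [piVec, piFun, if_neg h1, if_neg h2]
      by_cases h3 : IsSYRT n α (swapFun i T.val)
      · right
        refine ⟨⟨_, h3⟩, by rw [dif_pos h3], ?_⟩
        exact colsInc_swap_iff T.2 hi hin (fun e => h1 (le_of_eq e.symm))
      · left
        rw [dif_neg h3]

lemma piOp_single {n : ℕ} {α : List ℕ} (i : ℕ) (T : SYRTof n α) :
    piOp n α i (Finsupp.single T 1) = piVec n α i T := by
  simp [piOp, Finsupp.lift_apply, Finsupp.sum_single_index]

end YRS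
lemma YRS.supported_invariant (n : ℕ) (α : List ℕ) (s : Set (YRS.SYRTof n α))
    (hs : ∀ T T' : YRS.SYRTof n α,
      (YRS.colsIncreasing α T'.val ↔ YRS.colsIncreasing α T.val) → T ∈ s → T' ∈ s)
    (i : ℕ) (hi : 1 ≤ i) (hin : i < n) :
    ∀ x ∈ Finsupp.supported ℂ ℂ s, YRS.piOp n α i x ∈ Finsupp.supported ℂ ℂ s := by
  intro x hx
  rw [Finsupp.supported_eq_span_single] at hx ⊢
  have hmap : Submodule.map (YRS.piOp n α i)
      (Submodule.span ℂ ((fun T => Finsupp.single T (1:ℂ)) '' s)) ≤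
      Submodule.span ℂ ((fun T => Finsupp.single T (1:ℂ)) '' s) := by
    rw [Submodule.map_span, Submodule.span_le]
    rintro _ ⟨_, ⟨T, hTs, rfl⟩, rfl⟩
    rw [SetLike.mem_coe, YRS.piOp_single]
    rcases YRS.piVec_cases i hi hin T with h | ⟨T', hT', hiff⟩
    · rw [h]; exact Submodule.zero_mem _
    · rw [hT']
      exact Submodule.subset_span ⟨T', hs T T' hiff hTs, rfl⟩
  exact hmap (Submodule.mem_map_of_mem hx)

/-- If some `T ∈ SYRT(α)` has a column whose entries do not increase
from bottom to top, then `R_α` decomposes as a direct sum of two nonzero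
`π`-invariant subspaces. -/
theorem stmt5 (n : ℕ) (α : List ℕ) (hα : YRS.IsComposition n α)
    (T : ℕ × ℕ → ℕ) (hT : YRS.IsSYRT n α T) (hnot : ¬ YRS.colsIncreasing α T) :
    ∃ U V : Submodule ℂ (YRS.SYRTof n α →₀ ℂ),
      U ≠ ⊥ ∧ V ≠ ⊥ ∧
      (∀ i, 1 ≤ i → i < n → ∀ x ∈ U, YRS.piOp n α i x ∈ U) ∧
      (∀ i, 1 ≤ i → i < n → ∀ x ∈ V, YRS.piOp n α i x ∈ V) ∧
      IsCompl U V := by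
  set s : Set (YRS.SYRTof n α) := {S | YRS.colsIncreasing α S.val} with hs_def
  refine ⟨Finsupp.supported ℂ ℂ s, Finsupp.supported ℂ ℂ sᶜ, ?_, ?_, ?_, ?_, ?_, ?_⟩
  · -- U ≠ ⊥ : contains single rowFill 1
    intro hbot
    have hmem : (Finsupp.single (⟨YRS.rowFill α, YRS.rowFill_isSYRT n α hα⟩ :
        YRS.SYRTof n α) (1:ℂ)) ∈ Finsupp.supported ℂ ℂ s :=
      Finsupp.single_mem_supported ℂ 1 (Set.mem_setOf.mpr (YRS.rowFill_colsIncreasing α))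
    rw [hbot] at hmem
    have hmem := (Submodule.mem_bot ℂ (M := YRS.SYRTof n α →₀ ℂ)).mp hmem
    exact one_ne_zero (Finsupp.single_eq_zero.mp hmem)
  · intro hbot
    have hmem : (Finsupp.single (⟨T, hT⟩ : YRS.SYRTof n α) (1:ℂ)) ∈
        Finsupp.supported ℂ ℂ sᶜ :=
      Finsupp.single_mem_supported ℂ 1 (fun h => hnot (Set.mem_setOf.mp h))
    rw [hbot] at hmem
    have hmem := (Submodule.mem_bot ℂ (M := YRS.SYRTof n α →₀ ℂ)).mp hmem
    exact one_ne_zero (Finsupp.single_eq_zero.mp hmem)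
  · intro i hi hin
    exact YRS.supported_invariant n α s (fun T T' hiff hT => hiff.mpr hT) i hi hin
  · intro i hi hin
    exact YRS.supported_invariant n α sᶜ (fun T T' hiff hT => fun h => hT (hiff.mp h))
      i hi hin
  · exact Finsupp.disjoint_supported_supported disjoint_compl_right
  · rw [codisjoint_iff, ← Finsupp.supported_union, Set.union_compl_self,
      Finsupp.supported_univ]
end
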